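/- arXiv:1903.09018 — 5 statements merged into one kernel-verified Lean document; each statement's English description precedes it below -/
import Mathlib

section
/- Let ψ : ℝ → ℝ be a nondecreasing function and y ∈ ℝ with v⁻(y) and v⁺(y) finite. A real number f satisfies the duality inequality (ψ(x) − y)(x − f) ≥ 0 for all x ∈ ℝ if and only if v⁻(y) ≤ f ≤ v⁺(y). -/
/-- For a nondecreasing `ψ : ℝ → ℝ` with image unbounded above and below, a real
number `f` satisfies Arratia's duality inequality `(ψ x − y)(x − f) ≥ 0` for all
`x` iff `v⁻(y) ≤ f ≤ v⁺(y)`, where `v⁻(y) = inf{x : ψ x ≥ y}` and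
`v⁺(y) = inf{x : ψ x > y}`. -/
theorem stmt_2 (ψ : ℝ → ℝ) (hψ : Monotone ψ)
    (hup : ∀ z : ℝ, ∃ x : ℝ, z < ψ x) (hdown : ∀ z : ℝ, ∃ x : ℝ, ψ x < z)
    (y f : ℝ) :
    (∀ x : ℝ, 0 ≤ (ψ x - y) * (x - f)) ↔
      sInf {x : ℝ | y ≤ ψ x} ≤ f ∧ f ≤ sInf {x : ℝ | y < ψ x} := by
  set A : Set ℝ := {x : ℝ | y ≤ ψ x} with hA
  set B : Set ℝ := {x : ℝ | y < ψ x} with hB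
  obtain ⟨x0, hx0⟩ := hdown y
  have hAbdd : BddBelow A := ⟨x0, fun a ha => by
    by_contra h
    push_neg at h
    exact absurd (le_trans ha (hψ h.le)) (not_le.2 hx0)⟩
  have hBA : B ⊆ A := by
    intro x hx
    simp only [hA, hB, Set.mem_setOf_eq] at *
    exact le_of_lt hx
  have hBbdd : BddBelow B := hAbdd.mono hBA
  have hBne : B.Nonempty := hup y
  have hAne : A.Nonempty := hBne.mono hBA
  constructor
  · intro h
    constructor
    · by_contra hc
      push_neg at hc
      obtain ⟨x, hfx, hxA⟩ := exists_between hc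
      have hxnA : x ∉ A := fun hx => absurd (csInf_le hAbdd hx) (not_le.2 hxA)
      have hψx : ψ x < y := not_le.1 hxnA
      have := h x
      nlinarith
    · refine le_csInf hBne fun b hb => ?_
      have := h b
      have hψb : y < ψ b := hb
      nlinarith
  · rintro ⟨h1, h2⟩ x
    rcases lt_trichotomy (ψ x) y with hlt | heq | hgt
    · have hxle : x ≤ sInf A := le_csInf hAne fun a ha => by
        by_contra hc
        push_neg at hc
        exact absurd (le_trans ha (hψ hc.le)) (not_le.2 hlt)
      nlinarith
    · rw [heq]; simp
    · have : sInf B ≤ x := csInf_le hBbdd hgt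
      nlinarith
end

section
/- Let ω = {ω_{s,t}} be a family of maps of ℝ satisfying the evolutionary property ω_{s,t}(ω_{r,s}(x)) = ω_{r,t}(x) for r ≤ s ≤ t, with ω_{s,s}(x) = x, and such that each trajectory t ↦ ω_{s,t}(x) is continuous on [s,∞). Then for every s ≤ t the map x ↦ ω_{s,t}(x) is nondecreasing. -/
/-- A flow `ω = {ω_{s,t}}` on ℝ (evolutionary property, identity at equal times,
continuous trajectories) consists of nondecreasing maps. -/
theorem stmt_3 (ω : ℝ → ℝ → ℝ → ℝ)
    (hflow : ∀ r s t : ℝ, r ≤ s → s ≤ t → ∀ x : ℝ, ω s t (ω r s x) = ω r t x)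
    (hid : ∀ s x : ℝ, ω s s x = x)
    (hcont : ∀ s x : ℝ, ContinuousOn (fun t => ω s t x) (Set.Ici s)) :
    ∀ s t : ℝ, s ≤ t → Monotone (ω s t) := by
  intro s t hst x y hxy
  by_contra hlt
  push_neg at hlt
  -- h u = ω s u x - ω s u y
  have hc : ContinuousOn (fun u => ω s u x - ω s u y) (Set.Icc s t) :=
    ((hcont s x).sub (hcont s y)).mono Set.Icc_subset_Ici_self
  have hs0 : (fun u => ω s u x - ω s u y) s ≤ 0 := by
    simp [hid, hxy]
  have ht0 : 0 < (fun u => ω s u x - ω s u y) t := by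
    simpa using sub_pos.mpr hlt
  have : (0 : ℝ) ∈ Set.Icc ((fun u => ω s u x - ω s u y) s)
      ((fun u => ω s u x - ω s u y) t) := ⟨hs0, le_of_lt ht0⟩
  obtain ⟨u, hu, hu0⟩ := intermediate_value_Icc hst hc this
  have heq : ω s u x = ω s u y := by linarith [sub_eq_zero.mp hu0]
  have h1 : ω u t (ω s u x) = ω s t x := hflow s u t hu.1 hu.2 x
  have h2 : ω u t (ω s u y) = ω s t y := hflow s u t hu.1 hu.2 y
  rw [heq, h2] at h1
  exact absurd h1.symm (ne_of_gt hlt)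
end

section
/- Define g(x) = √(2/π) · x² · ∫_x^∞ e^{−z²/2} dz for x > 0. If g is strictly decreasing on [x*, ∞) for some x* > 0 with lim_{x→∞} g(x) = 0, and g⁻¹ : (0, g(x*)] → [x*, ∞) denotes its inverse, then g⁻¹(ε) ~ √(2|ln ε|) as ε → 0⁺; that is, g⁻¹(ε)/√(2|ln ε|) → 1 as ε → 0⁺. -/
open Filter Real MeasureTheory

lemma stmt7_gauss_int : Integrable (fun z : ℝ => Real.exp (-z ^ 2 / 2)) := by
  have h : (fun z : ℝ => Real.exp (-z ^ 2 / 2))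
      = fun z => Real.exp (-(1/2) * z ^ 2) := by
    funext z; congr 1; ring
  rw [h]; exact integrable_exp_neg_mul_sq (by norm_num)

lemma stmt7_mul_gauss_int : Integrable (fun z : ℝ => z * Real.exp (-z ^ 2 / 2)) := by
  have h : (fun z : ℝ => z * Real.exp (-z ^ 2 / 2))
      = fun z => z * Real.exp (-(1/2) * z ^ 2) := by
    funext z; congr 2; ring
  rw [h]; exact integrable_mul_exp_neg_mul_sq (by norm_num)

lemma stmt7_int_Ioi_mul (x : ℝ) :
    ∫ z in Set.Ioi x, z * Real.exp (-z ^ 2 / 2) = Real.exp (-x ^ 2 / 2) := by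
  have hderiv : ∀ z ∈ Set.Ici x,
      HasDerivAt (fun z : ℝ => -Real.exp (-z ^ 2 / 2)) (z * Real.exp (-z ^ 2 / 2)) z := by
    intro z _
    have h1 : HasDerivAt (fun z : ℝ => -z ^ 2 / 2) (-z) z := by
      have h := ((hasDerivAt_pow 2 z).neg).div_const 2
      refine h.congr_deriv ?_
      push_cast; ring
    have h3 := (h1.exp).neg
    refine h3.congr_deriv ?_
    ring
  have htend : Tendsto (fun z : ℝ => -Real.exp (-z ^ 2 / 2)) atTop (nhds 0) := by
    rw [show (0:ℝ) = -0 by ring]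
    refine Tendsto.neg ?_
    refine Real.tendsto_exp_atBot.comp ?_
    have h1 : Tendsto (fun z : ℝ => z ^ 2) atTop atTop := tendsto_pow_atTop two_ne_zero
    have h2 : Tendsto (fun z : ℝ => -(z ^ 2)) atTop atBot := tendsto_neg_atBot_iff.2 h1
    have h3 := h2.atBot_div_const (show (0:ℝ) < 2 by norm_num)
    refine h3.congr (fun z => by ring)
  have := integral_Ioi_of_hasDerivAt_of_tendsto' hderiv stmt7_mul_gauss_int.integrableOn htend
  rw [this]; ring

lemma stmt7_int_pos (x : ℝ) : 0 < ∫ z in Set.Ioi x, Real.exp (-z ^ 2 / 2) := by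
  rw [setIntegral_pos_iff_support_of_nonneg_ae
    (Filter.Eventually.of_forall (fun z => (Real.exp_pos _).le))
    stmt7_gauss_int.integrableOn]
  have hs : Function.support (fun z : ℝ => Real.exp (-z ^ 2 / 2)) = Set.univ := by
    ext z; simp [Real.exp_ne_zero]
  rw [hs, Set.univ_inter, Real.volume_Ioi]
  simp

lemma stmt7_upper {x : ℝ} (hx : 1 ≤ x) :
    ∫ z in Set.Ioi x, Real.exp (-z ^ 2 / 2) ≤ x⁻¹ * Real.exp (-x ^ 2 / 2) := by
  have hx0 : 0 < x := lt_of_lt_of_le one_pos hx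
  have h1 : ∫ z in Set.Ioi x, Real.exp (-z ^ 2 / 2)
      ≤ ∫ z in Set.Ioi x, x⁻¹ * (z * Real.exp (-z ^ 2 / 2)) := by
    refine setIntegral_mono_on stmt7_gauss_int.integrableOn
      (stmt7_mul_gauss_int.integrableOn.const_mul _) measurableSet_Ioi ?_
    intro z hz
    have hz' : x ≤ z := le_of_lt hz
    have he := (Real.exp_pos (-z ^ 2 / 2)).le
    calc Real.exp (-z ^ 2 / 2) = x⁻¹ * (x * Real.exp (-z ^ 2 / 2)) := by
          field_simp
      _ ≤ x⁻¹ * (z * Real.exp (-z ^ 2 / 2)) := by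
          apply mul_le_mul_of_nonneg_left _ (inv_nonneg.2 hx0.le)
          exact mul_le_mul_of_nonneg_right hz' he
  rw [MeasureTheory.integral_const_mul, stmt7_int_Ioi_mul] at h1
  exact h1

lemma stmt7_lower {x : ℝ} (hx : 1 ≤ x) :
    Real.exp (-3/2) * x⁻¹ * Real.exp (-x ^ 2 / 2)
      ≤ ∫ z in Set.Ioi x, Real.exp (-z ^ 2 / 2) := by
  have hx0 : 0 < x := lt_of_lt_of_le one_pos hx
  have hinv : x⁻¹ ≤ 1 := inv_le_one_of_one_le₀ hx
  have hinv0 : 0 < x⁻¹ := inv_pos.2 hx0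
  have h1 : ∫ z in Set.Ioc x (x + x⁻¹), Real.exp (-z ^ 2 / 2)
      ≤ ∫ z in Set.Ioi x, Real.exp (-z ^ 2 / 2) := by
    refine setIntegral_mono_set stmt7_gauss_int.integrableOn
      (Filter.Eventually.of_forall (fun z => (Real.exp_pos _).le)) ?_
    exact HasSubset.Subset.eventuallyLE (fun z hz => hz.1)
  have h2 : Real.exp (-(x + x⁻¹) ^ 2 / 2) * x⁻¹
      ≤ ∫ z in Set.Ioc x (x + x⁻¹), Real.exp (-z ^ 2 / 2) := by
    have h3 : ∫ z in Set.Ioc x (x + x⁻¹), Real.exp (-(x + x⁻¹) ^ 2 / 2)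
        ≤ ∫ z in Set.Ioc x (x + x⁻¹), Real.exp (-z ^ 2 / 2) := by
      refine setIntegral_mono_on (integrableOn_const ?_)
        stmt7_gauss_int.integrableOn measurableSet_Ioc ?_
      · rw [Real.volume_Ioc]; exact ENNReal.ofReal_ne_top
      · intro z hz
        apply Real.exp_le_exp.2
        have h1 := hz.1.le
        have h2 := hz.2
        nlinarith
    rw [MeasureTheory.setIntegral_const, measureReal_def, Real.volume_Ioc] at h3
    rw [ENNReal.toReal_ofReal (by linarith)] at h3
    calc Real.exp (-(x + x⁻¹) ^ 2 / 2) * x⁻¹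
        = (x + x⁻¹ - x) • Real.exp (-(x + x⁻¹) ^ 2 / 2) := by
          simp [smul_eq_mul]; ring
      _ ≤ _ := h3
  have h3 : Real.exp (-3/2) * Real.exp (-x ^ 2 / 2) ≤ Real.exp (-(x + x⁻¹) ^ 2 / 2) := by
    rw [← Real.exp_add]
    apply Real.exp_le_exp.2
    have hxx : x⁻¹ * x = 1 := inv_mul_cancel₀ hx0.ne'
    nlinarith [sq_nonneg x⁻¹]
  calc Real.exp (-3/2) * x⁻¹ * Real.exp (-x ^ 2 / 2)
      = (Real.exp (-3/2) * Real.exp (-x ^ 2 / 2)) * x⁻¹ := by ring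
    _ ≤ Real.exp (-(x + x⁻¹) ^ 2 / 2) * x⁻¹ :=
        mul_le_mul_of_nonneg_right h3 hinv0.le
    _ ≤ _ := le_trans h2 h1

lemma stmt7_log_div_sq : Tendsto (fun x : ℝ => Real.log x / x ^ 2) atTop (nhds 0) := by
  have h1 : Tendsto (fun x : ℝ => Real.log x / x) atTop (nhds 0) :=
    Real.isLittleO_log_id_atTop.tendsto_div_nhds_zero
  have h2 := h1.mul tendsto_inv_atTop_zero
  rw [mul_zero] at h2
  exact h2.congr (fun x => by rw [← div_eq_mul_inv, div_div, ← pow_two])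

lemma stmt7_sq_atTop : Tendsto (fun x : ℝ => x ^ 2) atTop atTop :=
  tendsto_pow_atTop two_ne_zero

lemma stmt7_ratio_lim (c : ℝ) :
    Tendsto (fun x : ℝ => (x ^ 2 - 2 * Real.log x + c) / x ^ 2) atTop (nhds 1) := by
  have ha : Tendsto (fun x : ℝ => 1 - 2 * (Real.log x / x ^ 2)) atTop (nhds (1 - 2 * 0)) :=
    tendsto_const_nhds.sub (stmt7_log_div_sq.const_mul 2)
  have hb : Tendsto (fun x : ℝ => c * (x ^ 2)⁻¹) atTop (nhds (c * 0)) :=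
    (tendsto_inv_atTop_zero.comp stmt7_sq_atTop).const_mul c
  have h := ha.add hb
  norm_num at h
  apply h.congr'
  filter_upwards [eventually_gt_atTop (0:ℝ)] with x hx
  have hx2 : (x:ℝ) ^ 2 ≠ 0 := by positivity
  field_simp

lemma stmt7_key (c : ℝ) :
    Tendsto (fun x : ℝ => x ^ 2 / (x ^ 2 - 2 * Real.log x + c)) atTop (nhds 1) := by
  have h2 := (stmt7_ratio_lim c).inv₀ one_ne_zero
  rw [inv_one] at h2
  exact h2.congr (fun x => inv_div _ _)

lemma stmt7_denpos (c : ℝ) : ∀ᶠ x : ℝ in atTop, 0 < x ^ 2 - 2 * Real.log x + c := by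
  filter_upwards [(stmt7_ratio_lim c).eventually (eventually_gt_nhds
      (show (1:ℝ)/2 < 1 by norm_num)),
    eventually_gt_atTop (0:ℝ)] with x h1 hx
  have hx2 : 0 < x ^ 2 := by positivity
  rw [lt_div_iff₀ hx2] at h1
  nlinarith

/-- If `g(x) = √(2/π) x² ∫_x^∞ e^{−z²/2} dz` is strictly decreasing on `[x*, ∞)`
with `g(x) → 0` at `∞`, and `ginv : (0, g(x*)] → [x*, ∞)` is its inverse on this
branch, then `g⁻¹(ε) ~ √(2|ln ε|)` as `ε → 0⁺`. -/
theorem stmt_7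
    (g : ℝ → ℝ)
    (hg : ∀ x : ℝ, g x = Real.sqrt (2 / π) * x ^ 2 *
      ∫ z in Set.Ioi x, Real.exp (-z ^ 2 / 2))
    (xstar : ℝ) (hxstar : 0 < xstar)
    (hanti : StrictAntiOn g (Set.Ici xstar))
    (hlim : Tendsto g atTop (nhds 0))
    (ginv : ℝ → ℝ)
    (hginv_mem : ∀ ε ∈ Set.Ioc (0 : ℝ) (g xstar), ginv ε ∈ Set.Ici xstar)
    (hginv_inv : ∀ ε ∈ Set.Ioc (0 : ℝ) (g xstar), g (ginv ε) = ε) :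
    Tendsto (fun ε : ℝ => ginv ε / Real.sqrt (2 * |Real.log ε|))
      (nhdsWithin 0 (Set.Ioi 0)) (nhds 1) := by
  have hpi0 : (0:ℝ) < 2 / π := by positivity
  have hpi : 0 < Real.sqrt (2 / π) := Real.sqrt_pos.2 hpi0
  have gpos : ∀ x : ℝ, 0 < x → 0 < g x := by
    intro x hx
    rw [hg]
    exact mul_pos (mul_pos hpi (by positivity)) (stmt7_int_pos x)
  have hgxs : 0 < g xstar := gpos xstar hxstar
  -- ginv tends to infinity
  have htop : Tendsto ginv (nhdsWithin 0 (Set.Ioi 0)) atTop := by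
    rw [tendsto_atTop]
    intro M
    have hM' : xstar ≤ max M xstar := le_max_right _ _
    have hM'mem : max M xstar ∈ Set.Ici xstar := hM'
    have hM'pos : 0 < max M xstar := lt_of_lt_of_le hxstar hM'
    have hgM' : 0 < g (max M xstar) := gpos _ hM'pos
    have hgle : g (max M xstar) ≤ g xstar := by
      rcases eq_or_lt_of_le hM' with h | h
      · rw [← h]
      · exact (hanti Set.self_mem_Ici hM'mem h).le
    have hmem : Set.Ioo (0:ℝ) (g (max M xstar)) ∈ nhdsWithin 0 (Set.Ioi 0) :=
      Ioo_mem_nhdsGT_of_mem ⟨le_refl 0, hgM'⟩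
    filter_upwards [hmem] with ε hε
    have hεIoc : ε ∈ Set.Ioc 0 (g xstar) := ⟨hε.1, le_trans hε.2.le hgle⟩
    have hy := hginv_mem ε hεIoc
    have hgy := hginv_inv ε hεIoc
    by_contra hcon
    push_neg at hcon
    have hlt : ginv ε < max M xstar := lt_of_lt_of_le hcon (le_max_left _ _)
    have h2 := hanti hy hM'mem hlt
    rw [hgy] at h2
    exact absurd h2 (not_lt.2 hε.2.le)
  -- constants
  set a1 : ℝ := -2 * Real.log (Real.sqrt (2 / π) * Real.exp (-3/2)) with ha1
  set a2 : ℝ := -2 * Real.log (Real.sqrt (2 / π)) with ha2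
  -- eventual bounds
  have hbound : ∀ᶠ ε in nhdsWithin (0:ℝ) (Set.Ioi 0),
      (ginv ε) ^ 2 / ((ginv ε) ^ 2 - 2 * Real.log (ginv ε) + a1)
          ≤ (ginv ε) ^ 2 / (2 * |Real.log ε|)
      ∧ (ginv ε) ^ 2 / (2 * |Real.log ε|)
          ≤ (ginv ε) ^ 2 / ((ginv ε) ^ 2 - 2 * Real.log (ginv ε) + a2)
      ∧ 0 < 2 * |Real.log ε| ∧ 0 ≤ ginv ε := by
    have hE1 : Set.Ioo (0:ℝ) (min (g xstar) 1) ∈ nhdsWithin 0 (Set.Ioi 0) :=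
      Ioo_mem_nhdsGT_of_mem ⟨le_refl 0, lt_min hgxs one_pos⟩
    filter_upwards [hE1, htop.eventually ((stmt7_denpos a1).and (stmt7_denpos a2)),
      htop.eventually (eventually_ge_atTop (max xstar 1))] with ε hε hd hx
    have hεpos : 0 < ε := hε.1
    have hε1 : ε < 1 := lt_of_lt_of_le hε.2 (min_le_right _ _)
    have hεIoc : ε ∈ Set.Ioc 0 (g xstar) :=
      ⟨hεpos, (lt_of_lt_of_le hε.2 (min_le_left _ _)).le⟩
    set x := ginv ε with hxdef
    have hx1 : (1:ℝ) ≤ x := le_trans (le_max_right _ _) hx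
    have hx0 : (0:ℝ) < x := lt_of_lt_of_le one_pos hx1
    have hgx : g x = ε := hginv_inv ε hεIoc
    -- upper and lower bounds on ε
    have hup : ε ≤ Real.sqrt (2 / π) * x * Real.exp (-x ^ 2 / 2) := by
      rw [← hgx, hg]
      calc Real.sqrt (2 / π) * x ^ 2 * ∫ z in Set.Ioi x, Real.exp (-z ^ 2 / 2)
          ≤ Real.sqrt (2 / π) * x ^ 2 * (x⁻¹ * Real.exp (-x ^ 2 / 2)) :=
            mul_le_mul_of_nonneg_left (stmt7_upper hx1) (by positivity)
        _ = Real.sqrt (2 / π) * x * Real.exp (-x ^ 2 / 2) := by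
            field_simp
    have hlo : Real.sqrt (2 / π) * Real.exp (-3/2) * (x * Real.exp (-x ^ 2 / 2)) ≤ ε := by
      rw [← hgx, hg]
      calc Real.sqrt (2 / π) * Real.exp (-3/2) * (x * Real.exp (-x ^ 2 / 2))
          = Real.sqrt (2 / π) * x ^ 2 * (Real.exp (-3/2) * x⁻¹ * Real.exp (-x ^ 2 / 2)) := by
            field_simp
        _ ≤ Real.sqrt (2 / π) * x ^ 2 * ∫ z in Set.Ioi x, Real.exp (-z ^ 2 / 2) :=
            mul_le_mul_of_nonneg_left (stmt7_lower hx1) (by positivity)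
    -- log bounds
    have hlogup : Real.log ε ≤ Real.log (Real.sqrt (2 / π)) + Real.log x + (-x ^ 2 / 2) := by
      have h := Real.log_le_log hεpos hup
      rwa [Real.log_mul (by positivity) (Real.exp_ne_zero _),
        Real.log_mul hpi.ne' hx0.ne', Real.log_exp] at h
    have hloglo : Real.log (Real.sqrt (2 / π) * Real.exp (-3/2)) + Real.log x + (-x ^ 2 / 2)
        ≤ Real.log ε := by
      have hlopos : 0 < Real.sqrt (2 / π) * Real.exp (-3/2) * (x * Real.exp (-x ^ 2 / 2)) := by
        positivity
      have h := Real.log_le_log hlopos hlo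
      rwa [Real.log_mul (by positivity) (by positivity),
        Real.log_mul hx0.ne' (Real.exp_ne_zero _), Real.log_exp, ← add_assoc] at h
    have hlogneg : Real.log ε < 0 := Real.log_neg hεpos hε1
    have habs : |Real.log ε| = -Real.log ε := abs_of_neg hlogneg
    have hden1 : 0 < x ^ 2 - 2 * Real.log x + a1 := hd.1
    have hden2 : 0 < x ^ 2 - 2 * Real.log x + a2 := hd.2
    have hA : x ^ 2 - 2 * Real.log x + a2 ≤ 2 * |Real.log ε| := by
      rw [habs, ha2]; linarith
    have hB : 2 * |Real.log ε| ≤ x ^ 2 - 2 * Real.log x + a1 := by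
      rw [habs, ha1]; linarith [Real.log_exp (-x ^ 2 / 2)]
    have habspos : 0 < 2 * |Real.log ε| := lt_of_lt_of_le hden2 hA
    refine ⟨?_, ?_, habspos, hx0.le⟩
    · exact div_le_div_of_nonneg_left (sq_nonneg x) habspos hB
    · exact div_le_div_of_nonneg_left (sq_nonneg x) hden2 hA
  -- squeeze
  have hlowlim : Tendsto (fun ε => (ginv ε) ^ 2 / ((ginv ε) ^ 2 - 2 * Real.log (ginv ε) + a1))
      (nhdsWithin 0 (Set.Ioi 0)) (nhds 1) := (stmt7_key a1).comp htop
  have huplim : Tendsto (fun ε => (ginv ε) ^ 2 / ((ginv ε) ^ 2 - 2 * Real.log (ginv ε) + a2))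
      (nhdsWithin 0 (Set.Ioi 0)) (nhds 1) := (stmt7_key a2).comp htop
  have hsq : Tendsto (fun ε => (ginv ε) ^ 2 / (2 * |Real.log ε|))
      (nhdsWithin 0 (Set.Ioi 0)) (nhds 1) :=
    tendsto_of_tendsto_of_tendsto_of_le_of_le' hlowlim huplim
      (hbound.mono fun ε h => h.1) (hbound.mono fun ε h => h.2.1)
  have hsqrt : Tendsto (fun ε => Real.sqrt ((ginv ε) ^ 2 / (2 * |Real.log ε|)))
      (nhdsWithin 0 (Set.Ioi 0)) (nhds 1) := by
    have h := (Real.continuous_sqrt.tendsto 1).comp hsq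
    rw [Real.sqrt_one] at h
    exact h
  refine Tendsto.congr' ?_ hsqrt
  filter_upwards [hbound] with ε h
  rw [Real.sqrt_div (sq_nonneg _), Real.sqrt_sq h.2.2.2]
end

section
/- Let ω be a flow of nondecreasing maps of ℝ with continuous trajectories such that each ω_{s,t} has image unbounded above and below, and such that for every s the range set R_s(ω) = ⋃_{r<s} ω_{r,s}(ℝ) is dense in ℝ. Then for each fixed t and y ∈ ℝ the map s ↦ v⁺_{t,s}(y) = inf{x : ω_{s,t}(x) > y} is continuous on (−∞, t]. -/
open Filter Set Topology

/-- For a flow `ω` of nondecreasing maps of ℝ with continuous trajectories,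
images unbounded above and below, and dense ranges `R_s(ω) = ⋃_{r<s} ω_{r,s}(ℝ)`,
the map `s ↦ v⁺_{t,s}(y) = inf{x : ω_{s,t}(x) > y}` is continuous on `(−∞, t]`. -/
theorem stmt_11 (ω : ℝ → ℝ → ℝ → ℝ)
    (hflow : ∀ r s t : ℝ, r ≤ s → s ≤ t → ∀ x : ℝ, ω s t (ω r s x) = ω r t x)
    (hid : ∀ s x : ℝ, ω s s x = x)
    (hmono : ∀ s t : ℝ, s ≤ t → Monotone (ω s t))
    (hcont : ∀ s x : ℝ, ContinuousOn (fun t => ω s t x) (Set.Ici s))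
    (hup : ∀ s t : ℝ, s ≤ t → ∀ z : ℝ, ∃ x : ℝ, z < ω s t x)
    (hdown : ∀ s t : ℝ, s ≤ t → ∀ z : ℝ, ∃ x : ℝ, ω s t x < z)
    (hdense : ∀ s : ℝ, Dense (⋃ r ∈ Set.Iio s, Set.range (ω r s)))
    (t y : ℝ) :
    ContinuousOn (fun s : ℝ => sInf {x : ℝ | y < ω s t x}) (Set.Iic t) := by
  set v : ℝ → ℝ := fun s => sInf {x : ℝ | y < ω s t x} with hv
  have hne : ∀ s, s ≤ t → Set.Nonempty {x : ℝ | y < ω s t x} := fun s hs => hup s t hs y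
  have hbdd : ∀ s, s ≤ t → BddBelow {x : ℝ | y < ω s t x} := by
    intro s hs
    obtain ⟨x₀, hx₀⟩ := hdown s t hs y
    refine ⟨x₀, fun w hw => ?_⟩
    by_contra h
    push_neg at h
    exact absurd hw (not_lt.2 (((hmono s t hs h.le).trans hx₀.le)))
  have hle : ∀ s, s ≤ t → ∀ x, ω s t x ≤ y → x ≤ v s := by
    intro s hs x hx
    refine le_csInf (hne s hs) (fun w hw => ?_)
    by_contra h
    push_neg at h
    exact absurd hw (not_lt.2 ((hmono s t hs h.le).trans hx))
  have hmem : ∀ s, s ≤ t → ∀ x, v s < x → y < ω s t x := by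
    intro s hs x hx
    obtain ⟨w, hwS, hwx⟩ := exists_lt_of_csInf_lt (hne s hs) hx
    exact lt_of_lt_of_le hwS (hmono s t hs hwx.le)
  have hout : ∀ s, s ≤ t → ∀ x, x < v s → ω s t x ≤ y := by
    intro s hs x hx
    by_contra h
    push_neg at h
    exact absurd (csInf_le (hbdd s hs) h) (not_le.2 hx)
  intro s₀ hs₀
  have hsle : s₀ ≤ t := hs₀
  refine Metric.tendsto_nhds.2 (fun ε hε => ?_)
  -- find p ∈ (v s₀ - ε, v s₀) and q ∈ (v s₀, v s₀ + ε) in the dense range union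
  obtain ⟨p, hpD, hpmem⟩ := (hdense s₀).exists_mem_open isOpen_Ioo
    (Set.nonempty_Ioo.2 (by linarith : v s₀ - ε < v s₀))
  obtain ⟨q, hqD, hqmem⟩ := (hdense s₀).exists_mem_open isOpen_Ioo
    (Set.nonempty_Ioo.2 (by linarith : v s₀ < v s₀ + ε))
  simp only [Set.mem_iUnion, Set.mem_range, Set.mem_Iio] at hpD hqD
  obtain ⟨r₁, hr₁, a, ha⟩ := hpD
  obtain ⟨r₂, hr₂, b, hb⟩ := hqD
  set r : ℝ := max r₁ r₂ with hrdef
  have hr : r < s₀ := max_lt hr₁ hr₂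
  set a' : ℝ := ω r₁ r a with ha'
  set b' : ℝ := ω r₂ r b with hb'
  have hpa : ω r s₀ a' = p := by
    rw [ha', hflow r₁ r s₀ (le_max_left _ _) hr.le a, ha]
  have hqb : ω r s₀ b' = q := by
    rw [hb', hflow r₂ r s₀ (le_max_right _ _) hr.le b, hb]
  -- key bounds at time t
  have hpt : ω r t a' ≤ y := by
    rw [← hflow r s₀ t hr.le hsle a', hpa]
    exact hout s₀ hsle p hpmem.2
  have hqt : y < ω r t b' := by
    rw [← hflow r s₀ t hr.le hsle b', hqb]
    exact hmem s₀ hsle q hqmem.1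
  -- continuity of trajectories at s₀
  have hca : ContinuousAt (fun s => ω r s a') s₀ :=
    ((hcont r a') s₀ hr.le).continuousAt (Ici_mem_nhds hr)
  have hcb : ContinuousAt (fun s => ω r s b') s₀ :=
    ((hcont r b') s₀ hr.le).continuousAt (Ici_mem_nhds hr)
  have E1 : ∀ᶠ s in 𝓝 s₀, v s₀ - ε < ω r s a' :=
    hca.preimage_mem_nhds (lt_mem_nhds (by rw [hpa]; exact hpmem.1))
  have E2 : ∀ᶠ s in 𝓝 s₀, ω r s b' < v s₀ + ε :=
    hcb.preimage_mem_nhds (gt_mem_nhds (by rw [hqb]; exact hqmem.2))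
  have E3 : ∀ᶠ s in 𝓝 s₀, r < s := lt_mem_nhds hr
  filter_upwards [nhdsWithin_le_nhds E1, nhdsWithin_le_nhds E2, nhdsWithin_le_nhds E3,
    self_mem_nhdsWithin] with s h1 h2 h3 hst
  have hst' : s ≤ t := hst
  have ha2 : ω r s a' ≤ v s := by
    refine hle s hst' _ ?_
    rw [hflow r s t h3.le hst' a']
    exact hpt
  have hb2 : v s ≤ ω r s b' := by
    refine csInf_le (hbdd s hst') ?_
    show y < ω s t (ω r s b')
    rw [hflow r s t h3.le hst' b']
    exact hqt
  rw [Real.dist_eq, abs_lt]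
  constructor <;> linarith
end

section
/- Let ω be a flow of nondecreasing maps of ℝ and let f = {f_{t,s} : s ≤ t} be a backward flow of maps of ℝ. Then f is dual to ω (i.e., (ω_{s,t}(x) − y)(x − f_{t,s}(y)) ≥ 0 for all s ≤ t, x, y) if and only if v⁻_{t,s}(y) ≤ f_{t,s}(y) ≤ v⁺_{t,s}(y) for all s ≤ t and y ∈ ℝ, where v⁻_{t,s}(y) = inf{x : ω_{s,t}(x) ≥ y} and v⁺_{t,s}(y) = inf{x : ω_{s,t}(x) > y}. -/
/-- A backward flow `f` is dual to a flow `ω` of nondecreasing maps of ℝ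
(i.e. `(ω_{s,t}(x) − y)(x − f_{t,s}(y)) ≥ 0` for all `s ≤ t, x, y`) if and only
if `v⁻_{t,s}(y) ≤ f_{t,s}(y) ≤ v⁺_{t,s}(y)` for all `s ≤ t` and `y`. -/
theorem stmt_12 (ω : ℝ → ℝ → ℝ → ℝ) (f : ℝ → ℝ → ℝ → ℝ)
    (hflow : ∀ r s t : ℝ, r ≤ s → s ≤ t → ∀ x : ℝ, ω s t (ω r s x) = ω r t x)
    (hid : ∀ s x : ℝ, ω s s x = x)
    (hmono : ∀ s t : ℝ, s ≤ t → Monotone (ω s t))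
    (hcont : ∀ s x : ℝ, ContinuousOn (fun t => ω s t x) (Set.Ici s))
    (hup : ∀ s t : ℝ, s ≤ t → ∀ z : ℝ, ∃ x : ℝ, z < ω s t x)
    (hdown : ∀ s t : ℝ, s ≤ t → ∀ z : ℝ, ∃ x : ℝ, ω s t x < z)
    (hbackflow : ∀ r s t : ℝ, r ≤ s → s ≤ t → ∀ y : ℝ, f s r (f t s y) = f t r y)
    (hbackid : ∀ s y : ℝ, f s s y = y) :
    (∀ s t x y : ℝ, s ≤ t → 0 ≤ (ω s t x - y) * (x - f t s y)) ↔
      (∀ s t y : ℝ, s ≤ t →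
        sInf {x : ℝ | y ≤ ω s t x} ≤ f t s y ∧
        f t s y ≤ sInf {x : ℝ | y < ω s t x}) := by
  constructor
  · intro hd s t y hst
    constructor
    · by_contra hcon
      push_neg at hcon
      set v := sInf {x : ℝ | y ≤ ω s t x} with hv
      set m := (f t s y + v) / 2 with hm
      have hm1 : f t s y < m := by simp [hm]; linarith
      have hm2 : m < v := by simp [hm]; linarith
      have hbdd : BddBelow {x : ℝ | y ≤ ω s t x} := by
        obtain ⟨x0, hx0⟩ := hdown s t hst y
        exact ⟨x0, fun z hz => le_of_not_gt fun h =>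
          absurd hz (not_le.2 (lt_of_le_of_lt (hmono s t hst h.le) hx0))⟩
      have hmem : ¬ y ≤ ω s t m := fun hmemm =>
        absurd (csInf_le hbdd hmemm) (not_le.2 hm2)
      push_neg at hmem
      have := hd s t m y hst
      nlinarith
    · obtain ⟨x1, hx1⟩ := hup s t hst y
      refine le_csInf ⟨x1, hx1⟩ fun x hx => ?_
      have hdx := hd s t x y hst
      have : y < ω s t x := hx
      nlinarith
  · intro h s t x y hst
    rcases lt_trichotomy (ω s t x) y with hlt | heq | hgt
    · have hle : x ≤ f t s y := by
        refine le_trans ?_ (h s t y hst).1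
        obtain ⟨x1, hx1⟩ := hup s t hst y
        refine le_csInf ⟨x1, hx1.le⟩ fun z hz => le_of_not_gt fun hzx => ?_
        exact absurd hz (not_le.2 (lt_of_le_of_lt (hmono s t hst hzx.le) hlt))
      nlinarith
    · simp [heq]
    · have hle : f t s y ≤ x := by
        refine le_trans (h s t y hst).2 ?_
        obtain ⟨x0, hx0⟩ := hdown s t hst y
        refine csInf_le ⟨x0, fun z hz => le_of_not_gt fun hzx => ?_⟩ hgt
        exact absurd (lt_of_le_of_lt (hmono s t hst hzx.le) hx0) (not_lt.2 hz.le)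
      nlinarith
end
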